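/- arXiv:2007.08738 — 6 statements merged into one kernel-verified Lean document; each statement's English description precedes it below -/
import Mathlib

section
/- For integers s, t, n with s ≤ t ≤ n and n ≥ 3s, one has C(t,s)/C(n,2s) ≤ (t/n)^s · (2s/(n-s))^s. -/
lemma descFactorial_mul_pow_le (k : ℕ) : ∀ a b : ℕ, k ≤ a → a ≤ b →
    a.descFactorial k * b ^ k ≤ b.descFactorial k * a ^ k := by
  induction k with
  | zero => simp
  | succ k ih =>
    intro a b hka hab
    rw [Nat.descFactorial_succ, Nat.descFactorial_succ, pow_succ, pow_succ]
    have hk : k ≤ a := Nat.le_of_succ_le hka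
    have h1 : (a - k) * b ≤ (b - k) * a := by
      have h := Nat.mul_le_mul_left k hab
      have h2 : k ≤ b := hk.trans hab
      rw [Nat.sub_mul, Nat.sub_mul]
      have : a * b = b * a := Nat.mul_comm a b
      omega
    have h2 := ih a b hk hab
    calc (a - k) * a.descFactorial k * (b ^ k * b)
        = ((a - k) * b) * (a.descFactorial k * b ^ k) := by ring
      _ ≤ ((b - k) * a) * (b.descFactorial k * a ^ k) := Nat.mul_le_mul h1 h2
      _ = (b - k) * b.descFactorial k * (a ^ k * a) := by ring

lemma choose_mul_pow_le (k a b : ℕ) (hka : k ≤ a) (hab : a ≤ b) :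
    a.choose k * b ^ k ≤ b.choose k * a ^ k := by
  have h := descFactorial_mul_pow_le k a b hka hab
  rw [Nat.descFactorial_eq_factorial_mul_choose, Nat.descFactorial_eq_factorial_mul_choose,
    Nat.mul_assoc, Nat.mul_assoc] at h
  exact Nat.le_of_mul_le_mul_left h (Nat.factorial_pos k)

lemma choose_div_le (k a b : ℕ) (hka : k ≤ a) (hab : a ≤ b) :
    (a.choose k : ℝ) / (b.choose k : ℝ) ≤ ((a : ℝ) / (b : ℝ)) ^ k := by
  rcases Nat.eq_zero_or_pos k with hk | hk
  · subst hk; simp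
  · have hb : 0 < b := lt_of_lt_of_le hk (hka.trans hab)
    have hCb : 0 < b.choose k := Nat.choose_pos (hka.trans hab)
    rw [div_pow, div_le_div_iff₀ (by exact_mod_cast hCb) (by positivity)]
    have := choose_mul_pow_le k a b hka hab
    have : (a.choose k * b ^ k : ℝ) ≤ (b.choose k * a ^ k : ℝ) := by exact_mod_cast this
    linarith

/-- For integers `s ≤ t ≤ n` with `n ≥ 3s`,
`C(t,s)/C(n,2s) ≤ (t/n)^s · (2s/(n-s))^s` over the reals. -/
theorem binom_ratio_two_le (s t n : ℕ) (hst : s ≤ t) (htn : t ≤ n) (hn : 3 * s ≤ n) :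
    (t.choose s : ℝ) / (n.choose (2 * s) : ℝ) ≤
      ((t : ℝ) / (n : ℝ)) ^ s * ((2 * s : ℝ) / ((n : ℝ) - (s : ℝ))) ^ s := by
  rcases Nat.eq_zero_or_pos s with hs | hs
  · subst hs; simp
  have hsn : s ≤ n := hst.trans htn
  have h2sn : 2 * s ≤ n := by omega
  have key : n.choose (2 * s) * (2 * s).choose s = n.choose s * (n - s).choose s := by
    have := Nat.choose_mul (n := n) (by omega : s ≤ 2 * s)
    have h2 : 2 * s - s = s := by omega
    rwa [h2] at this
  have hC1 : 0 < (n.choose s : ℝ) := by exact_mod_cast Nat.choose_pos hsn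
  have hC2 : 0 < ((n - s).choose s : ℝ) := by
    exact_mod_cast Nat.choose_pos (by omega : s ≤ n - s)
  have hC3 : 0 < ((2 * s).choose s : ℝ) := by
    exact_mod_cast Nat.choose_pos (by omega : s ≤ 2 * s)
  have hC4 : 0 < (n.choose (2 * s) : ℝ) := by exact_mod_cast Nat.choose_pos h2sn
  have keyR : (n.choose (2 * s) : ℝ) * ((2 * s).choose s : ℝ)
      = (n.choose s : ℝ) * ((n - s).choose s : ℝ) := by exact_mod_cast key
  have heq : (t.choose s : ℝ) / (n.choose (2 * s) : ℝ)
      = ((t.choose s : ℝ) / (n.choose s : ℝ)) *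
        (((2 * s).choose s : ℝ) / (((n - s).choose s : ℝ))) := by
    field_simp
    linear_combination (-(t.choose s : ℝ)) * keyR
  have A := choose_div_le s t n hst htn
  have B := choose_div_le s (2 * s) (n - s) (by omega) (by omega)
  have hcast : ((n - s : ℕ) : ℝ) = (n : ℝ) - (s : ℝ) := by
    exact Nat.cast_sub hsn
  rw [hcast] at B
  push_cast at B
  rw [heq]
  exact mul_le_mul A B (by positivity) (by positivity)
end

section
/- Any ε-reliable t-spanner for the n-point uniform metric must have Ω(n^{1+1/t}) edges. Precisely: let G = (P,E) be a graph on n points with the uniform metric (all pairwise distances equal to 1), t ≥ 1 an integer with n^{1/t} ≥ 8, and ε ∈ (0,1). Suppose that for every attack set B ⊆ P there is a set B⁺ ⊇ B with |B⁺| ≤ (1+ε)|B| such that every pair of vertices of P \ B⁺ is connected in G \ B by a path of at most t edges. Then |E| ≥ n^{1+1/t}/32. -/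
open Finset

section aux
variable {V : Type} [Fintype V] [DecidableEq V] (G : SimpleGraph V) [DecidableRel G.Adj]

/-- One step of BFS expansion, only expanding vertices not in `B`. -/
private def expandNbr (B S : Finset V) : Finset V :=
  S ∪ (S.filter (· ∉ B)).biUnion (fun x => G.neighborFinset x)

private lemma expandNbr_mono (B : Finset V) : Monotone (expandNbr G B) := by
  intro S T hST
  exact Finset.union_subset_union hST
    (Finset.biUnion_subset_biUnion_of_subset_left _ (Finset.filter_subset_filter _ hST))

private lemma subset_expandNbr (B S : Finset V) : S ⊆ expandNbr G B S :=
  Finset.subset_union_left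

private lemma subset_iterate_expandNbr (B S : Finset V) (k : ℕ) :
    S ⊆ (expandNbr G B)^[k] S := by
  induction k with
  | zero => simp
  | succ k ih =>
    calc S ⊆ (expandNbr G B)^[k] S := ih
    _ ⊆ (expandNbr G B)^[k] (expandNbr G B S) :=
        Monotone.iterate (expandNbr_mono G B) k (subset_expandNbr G B S)
    _ = (expandNbr G B)^[k+1] S := (Function.iterate_succ_apply _ _ _).symm

private lemma reach_mem_iterate (B : Finset V) {u v : V} (w : G.Walk u v) :
    ∀ (k : ℕ), w.length ≤ k → (∀ x ∈ w.support, x ∉ B) →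
      v ∈ (expandNbr G B)^[k] {u} := by
  induction w with
  | nil =>
    intro k _ _
    exact subset_iterate_expandNbr G B _ k (Finset.mem_singleton_self _)
  | @cons a b c hab w ih =>
    intro k hk hB
    cases k with
    | zero => simp at hk
    | succ k =>
      have hb : c ∈ (expandNbr G B)^[k] {b} :=
        ih k (by simpa using hk) (fun x hx => hB x (by simp [hx]))
      have ha : a ∉ B := hB a (by simp)
      have hbin : b ∈ expandNbr G B {a} := by
        apply Finset.mem_union_right
        refine Finset.mem_biUnion.2 ⟨a, ?_, ?_⟩
        · simp [ha]
        · simpa using hab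
      rw [Function.iterate_succ_apply]
      exact Monotone.iterate (expandNbr_mono G B) k (Finset.singleton_subset_iff.2 hbin) hb

private lemma card_expandNbr_le (B : Finset V) (D : ℕ) (hD : 1 ≤ D)
    (hdeg : ∀ x : V, x ∉ B → G.degree x ≤ D - 1) (S : Finset V) :
    (expandNbr G B S).card ≤ D * S.card := by
  have h1 : ((S.filter (· ∉ B)).biUnion (fun x => G.neighborFinset x)).card
      ≤ (D - 1) * S.card := by
    calc ((S.filter (· ∉ B)).biUnion (fun x => G.neighborFinset x)).card
        ≤ ∑ x ∈ S.filter (· ∉ B), (G.neighborFinset x).card := Finset.card_biUnion_le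
    _ ≤ ∑ _x ∈ S.filter (· ∉ B), (D - 1) := by
        refine Finset.sum_le_sum fun x hx => ?_
        rw [G.card_neighborFinset_eq_degree]
        exact hdeg x (Finset.mem_filter.1 hx).2
    _ = (S.filter (· ∉ B)).card * (D - 1) := by rw [Finset.sum_const, smul_eq_mul]
    _ ≤ S.card * (D - 1) := Nat.mul_le_mul_right _ (Finset.card_filter_le _ _)
    _ = (D - 1) * S.card := Nat.mul_comm _ _
  calc (expandNbr G B S).card
      ≤ S.card + ((S.filter (· ∉ B)).biUnion (fun x => G.neighborFinset x)).card :=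
        Finset.card_union_le _ _
  _ ≤ S.card + (D - 1) * S.card := Nat.add_le_add_left h1 _
  _ = (1 + (D - 1)) * S.card := by rw [Nat.add_mul, Nat.one_mul]
  _ = D * S.card := by congr 1; omega

private lemma card_iterate_expandNbr (B : Finset V) (D : ℕ) (hD : 1 ≤ D)
    (hdeg : ∀ x : V, x ∉ B → G.degree x ≤ D - 1) (u : V) (k : ℕ) :
    ((expandNbr G B)^[k] {u}).card ≤ D ^ k := by
  induction k with
  | zero => simp
  | succ k ih =>
    rw [Function.iterate_succ_apply']
    calc (expandNbr G B ((expandNbr G B)^[k] {u})).card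
        ≤ D * ((expandNbr G B)^[k] {u}).card := card_expandNbr_le G B D hD hdeg _
    _ ≤ D * D ^ k := Nat.mul_le_mul_left _ ih
    _ = D ^ (k+1) := by rw [pow_succ, Nat.mul_comm]

end aux

/-- Any `ε`-reliable `t`-spanner of the `n`-point uniform metric (with `n^{1/t} ≥ 8`)
has at least `n^{1+1/t}/32` edges. -/
theorem reliable_uniform_spanner_lower_bound
    {V : Type} [Fintype V] [DecidableEq V]
    (G : SimpleGraph V) [DecidableRel G.Adj]
    (n t : ℕ) (hn : Fintype.card V = n) (ht : 1 ≤ t)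
    (hnt : (8 : ℝ) ≤ (n : ℝ) ^ ((1 : ℝ) / (t : ℝ)))
    (ε : ℝ) (hε : ε ∈ Set.Ioo (0 : ℝ) 1)
    (hrel : ∀ B : Finset V, ∃ B' : Finset V, B ⊆ B' ∧
      (B'.card : ℝ) ≤ (1 + ε) * (B.card : ℝ) ∧
      ∀ u v : V, u ∉ B' → v ∉ B' →
        ∃ w : G.Walk u v, w.length ≤ t ∧ ∀ x ∈ w.support, x ∉ B) :
    (n : ℝ) ^ ((1 : ℝ) + 1 / (t : ℝ)) / 32 ≤ (G.edgeFinset.card : ℝ) := by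
  by_contra hcon
  push_neg at hcon
  obtain ⟨hε0, hε1⟩ := hε
  have ht0 : (0:ℝ) < (t:ℝ) := by exact_mod_cast ht
  have htne : (t:ℝ) ≠ 0 := ne_of_gt ht0
  have hn1 : 1 ≤ n := by
    by_contra h
    have hn0 : n = 0 := by omega
    rw [hn0] at hnt
    rw [Nat.cast_zero, Real.zero_rpow (by positivity : (1:ℝ)/(t:ℝ) ≠ 0)] at hnt
    linarith
  have hnpos : (0:ℝ) < (n:ℝ) := by exact_mod_cast hn1
  set Δ : ℝ := (n : ℝ) ^ ((1 : ℝ) / (t : ℝ)) / 4 with hΔdef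
  have hΔ2 : (2:ℝ) ≤ Δ := by rw [hΔdef]; linarith
  have hΔpos : (0:ℝ) < Δ := by linarith
  set D : ℕ := ⌈Δ⌉₊ with hDdef
  have hΔD : Δ ≤ (D:ℝ) := Nat.le_ceil Δ
  have hDΔ : (D:ℝ) ≤ (3/2) * Δ := by
    have h := Nat.ceil_lt_add_one (le_of_lt hΔpos) (R := ℝ)
    rw [← hDdef] at h
    linarith
  have hD1 : 1 ≤ D := by
    by_contra h
    have hD0 : D = 0 := by omega
    rw [hD0] at hΔD
    push_cast at hΔD
    linarith
  have hsplit : (n : ℝ) ^ ((1 : ℝ) + 1 / (t : ℝ)) = (n:ℝ) * (4 * Δ) := by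
    rw [Real.rpow_add hnpos, Real.rpow_one, hΔdef]
    ring
  have hΔt : Δ ^ t = (n:ℝ) / 4 ^ t := by
    rw [hΔdef, div_pow]
    congr 1
    rw [← Real.rpow_natCast ((n:ℝ) ^ ((1:ℝ)/(t:ℝ))) t, ← Real.rpow_mul (le_of_lt hnpos)]
    rw [one_div, inv_mul_cancel₀ htne, Real.rpow_one]
  -- the attack set: all vertices of high degree
  set B : Finset V := Finset.univ.filter (fun x => D ≤ G.degree x) with hBdef
  have hdeg : ∀ x : V, x ∉ B → G.degree x ≤ D - 1 := by
    intro x hx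
    rw [hBdef] at hx
    simp only [Finset.mem_filter, Finset.mem_univ, true_and, not_le] at hx
    omega
  have hBsum : D * B.card ≤ 2 * G.edgeFinset.card := by
    calc D * B.card = ∑ _x ∈ B, D := by rw [Finset.sum_const, smul_eq_mul, Nat.mul_comm]
    _ ≤ ∑ x ∈ B, G.degree x := by
        refine Finset.sum_le_sum fun x hx => ?_
        rw [hBdef] at hx
        exact (Finset.mem_filter.1 hx).2
    _ ≤ ∑ x, G.degree x := Finset.sum_le_sum_of_subset (Finset.subset_univ B)
    _ = 2 * G.edgeFinset.card := G.sum_degrees_eq_twice_card_edges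
  have hBcard : (B.card : ℝ) < (n:ℝ) / 4 := by
    have h1 : Δ * (B.card:ℝ) ≤ 2 * (G.edgeFinset.card : ℝ) := by
      calc Δ * (B.card:ℝ) ≤ (D:ℝ) * B.card :=
            mul_le_mul_of_nonneg_right hΔD (Nat.cast_nonneg _)
      _ ≤ 2 * (G.edgeFinset.card : ℝ) := by exact_mod_cast hBsum
    have key : (n:ℝ) * (4 * Δ) / 32 = Δ * ((n:ℝ)/4) / 2 := by ring
    have h2 : 2 * (G.edgeFinset.card : ℝ) < Δ * ((n:ℝ)/4) := by
      rw [hsplit, key] at hcon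
      linarith
    exact lt_of_mul_lt_mul_left (lt_of_le_of_lt h1 h2) (le_of_lt hΔpos)
  obtain ⟨B', hsub, hB'card, hwalk⟩ := hrel B
  have hB'lt : (B'.card : ℝ) < (n:ℝ)/2 := by
    have h1 : (1+ε) * (B.card:ℝ) ≤ 2 * (B.card:ℝ) :=
      mul_le_mul_of_nonneg_right (by linarith) (Nat.cast_nonneg _)
    linarith
  have hB'n : B'.card < n := by
    have h : (B'.card:ℝ) < (n:ℝ) := by linarith
    exact_mod_cast h
  have hne : (Finset.univ \ B').Nonempty := by
    rw [← Finset.card_pos, Finset.card_sdiff_of_subset (Finset.subset_univ _), Finset.card_univ, hn]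
    omega
  obtain ⟨u, hu⟩ := hne
  have hu' : u ∉ B' := (Finset.mem_sdiff.1 hu).2
  have hsubset : Finset.univ \ B' ⊆ (expandNbr G B)^[t] {u} := by
    intro v hv
    have hv' : v ∉ B' := (Finset.mem_sdiff.1 hv).2
    obtain ⟨w, hw1, hw2⟩ := hwalk u v hu' hv'
    exact reach_mem_iterate G B w t hw1 hw2
  have hcount : n - B'.card ≤ D ^ t := by
    have h1 := Finset.card_le_card hsubset
    rw [Finset.card_sdiff_of_subset (Finset.subset_univ _), Finset.card_univ, hn] at h1
    exact h1.trans (card_iterate_expandNbr G B D hD1 hdeg u t)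
  have hDt : ((D:ℝ))^t ≤ 3*(n:ℝ)/8 := by
    calc ((D:ℝ))^t ≤ ((3/2)*Δ)^t := pow_le_pow_left₀ (Nat.cast_nonneg D) hDΔ t
    _ = (3/2)^t * Δ^t := mul_pow _ _ _
    _ = (n:ℝ) * ((3/8:ℝ))^t := by
        have h38 : ((3:ℝ)/2)^t / (4:ℝ)^t = ((3:ℝ)/8)^t := by
          rw [← div_pow]; norm_num
        rw [hΔt, ← h38]
        have h4 : ((4:ℝ))^t ≠ 0 := by positivity
        field_simp
    _ ≤ (n:ℝ) * (3/8) := by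
        refine mul_le_mul_of_nonneg_left ?_ (le_of_lt hnpos)
        exact pow_le_of_le_one (by norm_num) (by norm_num) (by omega)
    _ = 3*(n:ℝ)/8 := by ring
  have hfinal : (n:ℝ) ≤ ((D:ℝ))^t + (B'.card:ℝ) := by
    have h : n ≤ D^t + B'.card := by omega
    exact_mod_cast h
  linarith
end

section
/- (Expectation bound for the constellation spanner.) Let P be a set of n points, ε ∈ (0,1), and k = 2⌈ε⁻¹ log(ε⁻¹)⌉ + 1. Sample k points from P independently and uniformly at random (with replacement) to form a center set C, and let B ⊆ P be a fixed set of size b with (1+ε)b < n. Define the loss to be (n−1−b)/b if C ⊆ B, and 0 otherwise. Then the expected loss is at most ε. -/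
/-- Expectation bound for the constellation spanner: with
`k = 2⌈ε⁻¹ log ε⁻¹⌉ + 1` uniform random centers (with replacement) from an
`n`-point set `P`, and a fixed attack set `B` of size `b` with `(1+ε)b < n`,
the expected loss (which is `(n-1-b)/b` when all centers fall in `B`, `0`
otherwise) is at most `ε`. -/
theorem constellation_expected_loss_le
    {P : Type} [Fintype P] [DecidableEq P]
    (n : ℕ) (hn : Fintype.card P = n)
    (ε : ℝ) (hε : ε ∈ Set.Ioo (0 : ℝ) 1)
    (k : ℕ) (hk : k = 2 * ⌈ε⁻¹ * Real.log ε⁻¹⌉₊ + 1)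
    (B : Finset P) (b : ℕ) (hb : b = B.card) (hbpos : 0 < b)
    (hbn : (1 + ε) * (b : ℝ) < (n : ℝ)) :
    (∑ c : Fin k → P,
        (if ∀ i : Fin k, c i ∈ B then ((n : ℝ) - 1 - (b : ℝ)) / (b : ℝ) else 0))
      / (n : ℝ) ^ k ≤ ε := by
  obtain ⟨hε0, hε1⟩ := hε
  have hbR : (0:ℝ) < (b:ℝ) := by exact_mod_cast hbpos
  have hnR : (0:ℝ) < (n:ℝ) := by nlinarith
  set m : ℕ := 2 * ⌈ε⁻¹ * Real.log ε⁻¹⌉₊ with hm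
  have hkm : k = m + 1 := hk
  -- compute the sum
  have hfilter : (Finset.univ.filter (fun c : Fin k → P => ∀ i, c i ∈ B))
      = Fintype.piFinset (fun _ : Fin k => B) := by
    ext c
    simp [Fintype.mem_piFinset]
  have hsum : (∑ c : Fin k → P,
      (if ∀ i : Fin k, c i ∈ B then ((n : ℝ) - 1 - (b : ℝ)) / (b : ℝ) else 0))
      = (b:ℝ)^k * (((n : ℝ) - 1 - (b : ℝ)) / (b : ℝ)) := by
    rw [Finset.sum_ite, Finset.sum_const_zero, Finset.sum_const, add_zero,
      hfilter, nsmul_eq_mul, Fintype.card_piFinset]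
    simp [← hb]
  rw [hsum]
  -- key exponential bound : 1 ≤ ε * (1+ε)^m
  have hlog : ε / 2 ≤ Real.log (1 + ε) := by
    have h1 : (0:ℝ) < 1 + ε := by linarith
    have h2 : Real.log (1 + ε)⁻¹ ≤ (1 + ε)⁻¹ - 1 :=
      Real.log_le_sub_one_of_pos (by positivity)
    rw [Real.log_inv] at h2
    have h3 : (1 + ε)⁻¹ - 1 = -(ε / (1 + ε)) := by field_simp; ring
    rw [h3] at h2
    have h4 : ε / 2 ≤ ε / (1 + ε) := by
      apply div_le_div_of_nonneg_left (le_of_lt hε0) (by linarith) (by linarith)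
    linarith
  have hlogeps : (0:ℝ) ≤ Real.log ε⁻¹ := by
    apply Real.log_nonneg
    rw [le_inv_comm₀] <;> simp [hε0, le_of_lt hε1]
  have hkey : Real.log ε⁻¹ ≤ (m:ℝ) * Real.log (1 + ε) := by
    have h1 : ε⁻¹ * Real.log ε⁻¹ ≤ (⌈ε⁻¹ * Real.log ε⁻¹⌉₊ : ℝ) := Nat.le_ceil _
    have h2 : (m:ℝ) = 2 * (⌈ε⁻¹ * Real.log ε⁻¹⌉₊ : ℝ) := by
      rw [hm]; push_cast; ring
    have hlognn : (0:ℝ) ≤ Real.log (1 + ε) := by linarith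
    have h3 : (m:ℝ) * (ε / 2) ≤ (m:ℝ) * Real.log (1 + ε) := by
      apply mul_le_mul_of_nonneg_left hlog (by positivity)
    have h4 : Real.log ε⁻¹ ≤ (m:ℝ) * (ε / 2) := by
      rw [h2]
      have := mul_le_mul_of_nonneg_right h1 (le_of_lt hε0)
      calc Real.log ε⁻¹ = (ε⁻¹ * Real.log ε⁻¹) * ε := by
            field_simp
        _ ≤ (⌈ε⁻¹ * Real.log ε⁻¹⌉₊ : ℝ) * ε := this
        _ = 2 * (⌈ε⁻¹ * Real.log ε⁻¹⌉₊ : ℝ) * (ε / 2) := by ring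
    linarith
  have hpow : ε⁻¹ ≤ (1 + ε) ^ m := by
    have h1 : (0:ℝ) < 1 + ε := by linarith
    calc ε⁻¹ = Real.exp (Real.log ε⁻¹) := (Real.exp_log (by positivity)).symm
      _ ≤ Real.exp ((m:ℝ) * Real.log (1 + ε)) := Real.exp_le_exp.mpr hkey
      _ = (1 + ε) ^ m := by
          rw [Real.exp_nat_mul, Real.exp_log h1]
  -- combine
  have hbn' : (b:ℝ) * (1 + ε) < (n:ℝ) := by linarith [hbn]
  have hratio : (b:ℝ)^m * (1+ε)^m ≤ (n:ℝ)^m := by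
    have := pow_le_pow_left₀ (by positivity : (0:ℝ) ≤ (b:ℝ) * (1+ε)) (le_of_lt hbn') m
    rwa [mul_pow] at this
  -- step 1: numerator bound
  have hnum : (b:ℝ)^k * (((n : ℝ) - 1 - (b : ℝ)) / (b : ℝ)) ≤ (b:ℝ)^m * (n:ℝ) := by
    have heq : (b:ℝ)^k * (((n : ℝ) - 1 - (b : ℝ)) / (b : ℝ))
        = (b:ℝ)^m * ((n:ℝ) - 1 - (b:ℝ)) := by
      rw [hkm, pow_succ]; field_simp
    rw [heq]
    apply mul_le_mul_of_nonneg_left (by linarith) (by positivity)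
  have hden : (0:ℝ) < (n:ℝ)^k := by positivity
  rw [div_le_iff₀ hden]
  calc (b:ℝ)^k * (((n : ℝ) - 1 - (b : ℝ)) / (b : ℝ)) ≤ (b:ℝ)^m * (n:ℝ) := hnum
    _ ≤ ε * (n:ℝ)^k := by
        rw [hkm, pow_succ]
        rw [← mul_assoc]
        apply mul_le_mul_of_nonneg_right _ (le_of_lt hnR)
        -- b^m ≤ ε * n^m  since n^m ≥ b^m (1+ε)^m ≥ b^m ε⁻¹
        have h1 : (b:ℝ)^m * ε⁻¹ ≤ (n:ℝ)^m := by
          calc (b:ℝ)^m * ε⁻¹ ≤ (b:ℝ)^m * (1+ε)^m :=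
                mul_le_mul_of_nonneg_left hpow (by positivity)
            _ ≤ (n:ℝ)^m := hratio
        calc (b:ℝ)^m = ε * ((b:ℝ)^m * ε⁻¹) := by field_simp
          _ ≤ ε * (n:ℝ)^m := mul_le_mul_of_nonneg_left h1 (le_of_lt hε0)
end

section
/- Let G = (V,E) be a graph on n vertices with girth at least 2t+2 and |E| ≥ c·n^{1+1/(2t)}, regarded as a metric with the shortest path metric. Then every t-cover C of this metric has size at least c·n^{1+1/(2t)}; i.e., Σ_{S∈C}|S| ≥ |E|. -/
open SimpleGraph Finset

/-- The second vertex of `p.takeUntil y` agrees with that of `p` (as `head?` of the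
support tail), provided `y ≠ u`. -/
private lemma head?_tail_takeUntil {V : Type} [DecidableEq V] {G : SimpleGraph V} {u v y : V}
    (p : G.Walk u v) (hy : y ∈ p.support) (hyu : y ≠ u) :
    (p.takeUntil y hy).support.tail.head? = p.support.tail.head? := by
  have hspec := congrArg Walk.support (p.take_spec hy)
  rw [Walk.support_append] at hspec
  have h1 : (p.takeUntil y hy).support = u :: (p.takeUntil y hy).support.tail :=
    Walk.support_eq_cons _
  cases hT : (p.takeUntil y hy).support.tail with
  | nil =>
    exfalso
    have hy2 : y ∈ (p.takeUntil y hy).support := Walk.end_mem_support _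
    rw [h1, hT] at hy2
    simp at hy2
    exact hyu hy2
  | cons a T' =>
    conv_rhs => rw [← hspec, h1, hT]
    simp

/-- Two distinct paths between the same pair of vertices yield a cycle whose length is at
most the sum of the lengths of the two paths. -/
private lemma cycle_of_two_paths {V : Type} [DecidableEq V] {G : SimpleGraph V} :
    ∀ (N : ℕ) ⦃u v : V⦄ (p q : G.Walk u v), p.IsPath → q.IsPath → p ≠ q →
      p.length + q.length ≤ N →
      ∃ (x : V) (c : G.Walk x x), c.IsCycle ∧ c.length ≤ p.length + q.length := by
  intro N
  induction N with
  | zero =>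
    intro u v p q hp hq hne hlen
    exfalso
    apply hne
    have hp0 : p.length = 0 := by omega
    have hq0 : q.length = 0 := by omega
    cases p with
    | nil => exact (Walk.nil_iff_eq_nil.mp (Walk.length_eq_zero_iff.mp hq0)).symm
    | cons h p' => simp [Walk.length_cons] at hp0
  | succ N ih =>
    intro u v p q hp hq hne hlen
    cases p with
    | nil => exact absurd ((Walk.isPath_iff_eq_nil (p := q)).mp hq).symm hne
    | cons hadj p' =>
      rename_i w
      cases q with
      | nil => exact absurd ((Walk.isPath_iff_eq_nil (p := Walk.cons hadj p')).mp hp) hne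
      | cons hqadj q' =>
        rename_i x
        have hp' : p'.IsPath := ((Walk.cons_isPath_iff _ _).mp hp).1
        have hup' : u ∉ p'.support := ((Walk.cons_isPath_iff _ _).mp hp).2
        have hq' : q'.IsPath := ((Walk.cons_isPath_iff _ _).mp hq).1
        have huq' : u ∉ q'.support := ((Walk.cons_isPath_iff _ _).mp hq).2
        by_cases hwx : w = x
        · subst hwx
          have hne' : p' ≠ q' := fun h => hne (by rw [h])
          obtain ⟨y, c, hc, hcl⟩ := ih p' q' hp' hq' hne'
            (by rw [Walk.length_cons, Walk.length_cons] at hlen; omega)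
          exact ⟨y, c, hc, by rw [Walk.length_cons, Walk.length_cons]; omega⟩
        · by_cases hmeet : ∃ y ∈ p'.support, y ∈ (Walk.cons hqadj q').support ∧ y ≠ v
          · obtain ⟨y, hyp', hyq, hyv⟩ := hmeet
            have hyp : y ∈ (Walk.cons hadj p').support := by
              rw [Walk.support_cons]; exact List.mem_cons_of_mem _ hyp'
            have hyu : y ≠ u := fun h => hup' (h ▸ hyp')
            have hAp : ((Walk.cons hadj p').takeUntil y hyp).IsPath := hp.takeUntil _
            have hBp : ((Walk.cons hqadj q').takeUntil y hyq).IsPath := hq.takeUntil _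
            have hlA := congrArg Walk.length ((Walk.cons hadj p').take_spec hyp)
            rw [Walk.length_append] at hlA
            have hdrop : ((Walk.cons hadj p').dropUntil y hyp).length ≠ 0 :=
              fun h0 => hyv (Walk.eq_of_length_eq_zero h0)
            have hlB := congrArg Walk.length ((Walk.cons hqadj q').take_spec hyq)
            rw [Walk.length_append] at hlB
            have hAB : (Walk.cons hadj p').takeUntil y hyp ≠
                (Walk.cons hqadj q').takeUntil y hyq := by
              intro h
              apply hwx
              have h1 := head?_tail_takeUntil (Walk.cons hadj p') hyp hyu
              have h2 := head?_tail_takeUntil (Walk.cons hqadj q') hyq hyu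
              rw [h] at h1
              rw [h1] at h2
              rw [Walk.support_cons, List.tail_cons, Walk.support_eq_cons p',
                List.head?_cons] at h2
              rw [Walk.support_cons, List.tail_cons, Walk.support_eq_cons q',
                List.head?_cons] at h2
              injection h2
            have heP : (Walk.cons hadj p').length = p'.length + 1 := Walk.length_cons _ _
            have heQ : (Walk.cons hqadj q').length = q'.length + 1 := Walk.length_cons _ _
            have hBle := Walk.length_takeUntil_le (Walk.cons hqadj q') hyq
            obtain ⟨z, c, hc, hcl⟩ := ih _ _ hAp hBp hAB (by omega)
            exact ⟨z, c, hc, by omega⟩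
          · push_neg at hmeet
            refine ⟨u, Walk.cons hadj (p'.append (Walk.cons hqadj q').reverse), ?_, ?_⟩
            · rw [Walk.cons_isCycle_iff]
              constructor
              · rw [Walk.isPath_def, Walk.support_append]
                refine List.Nodup.append hp'.support_nodup ?_ ?_
                · have h := hq.reverse.support_nodup
                  rw [Walk.support_eq_cons (Walk.cons hqadj q').reverse] at h
                  exact (List.nodup_cons.mp h).2
                · intro z hz1 hz2
                  have hz3 : z ∈ (Walk.cons hqadj q').reverse.support :=
                    List.mem_of_mem_tail hz2
                  rw [Walk.support_reverse, List.mem_reverse] at hz3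
                  have hzv : z = v := hmeet z hz1 hz3
                  subst hzv
                  have hnd := hq.reverse.support_nodup
                  rw [Walk.support_eq_cons (Walk.cons hqadj q').reverse] at hnd
                  exact (List.nodup_cons.mp hnd).1 hz2
              · intro hmem
                rw [Walk.edges_append, List.mem_append] at hmem
                rcases hmem with hm | hm
                · exact hup' (Walk.fst_mem_support_of_mem_edges p' hm)
                · rw [Walk.edges_reverse, List.mem_reverse, Walk.edges_cons] at hm
                  rcases List.mem_cons.mp hm with hm1 | hm2
                  · rcases Sym2.eq_iff.mp hm1 with ⟨-, h⟩ | ⟨h1, -⟩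
                    · exact hwx h
                    · exact hqadj.ne h1
                  · exact huq' (Walk.fst_mem_support_of_mem_edges q' hm2)
            · rw [Walk.length_cons, Walk.length_append, Walk.length_reverse,
                Walk.length_cons, Walk.length_cons]
              omega

/-- If a connected graph on `n` vertices has girth at least `2t+2` and at least
`c·n^{1+1/(2t)}` edges, then every `t`-cover of its shortest-path metric has
size at least `c·n^{1+1/(2t)}` (indeed at least `|E|`). -/
theorem cover_size_lower_bound_of_girth
    {V : Type} [Fintype V] [DecidableEq V]
    (G : SimpleGraph V) [DecidableRel G.Adj]
    (hconn : G.Connected)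
    (n t : ℕ) (hn : Fintype.card V = n) (ht : 2 ≤ t)
    (hgirth : (2 * t + 2 : ℕ∞) ≤ G.girth)
    (c : ℝ) (hc : 0 < c)
    (hE : c * (n : ℝ) ^ ((1 : ℝ) + 1 / (2 * (t : ℝ))) ≤ (G.edgeFinset.card : ℝ))
    (C : Finset (Finset V))
    (hC : ∀ p q : V, p ≠ q → ∃ S ∈ C, p ∈ S ∧ q ∈ S ∧
      ∀ u ∈ S, ∀ v ∈ S, G.dist u v ≤ t * G.dist p q) :
    (G.edgeFinset.card : ℝ) ≤ ∑ S ∈ C, (S.card : ℝ) ∧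
      c * (n : ℝ) ^ ((1 : ℝ) + 1 / (2 * (t : ℝ))) ≤ ∑ S ∈ C, (S.card : ℝ) := by
  classical
  -- every cycle has length at least 2t+2
  have hcyc : ∀ (x : V) (cyc : G.Walk x x), cyc.IsCycle → 2 * t + 2 ≤ cyc.length := by
    intro x cyc hcycle
    have h1 : G.egirth ≤ (cyc.length : ℕ∞) := by
      refine le_trans (iInf_le _ x) (le_trans (iInf_le _ cyc) (iInf_le _ hcycle))
    have h2 : G.egirth ≠ ⊤ := (h1.trans_lt (by exact_mod_cast (lt_top_iff_ne_top.mpr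
      (by exact ENat.coe_ne_top cyc.length)))).ne
    have h4 : ((G.girth : ℕ∞)) = G.egirth := ENat.coe_toNat h2
    have h5 : (2 * (t : ℕ∞) + 2) ≤ (cyc.length : ℕ∞) := hgirth.trans (h4.le.trans h1)
    exact_mod_cast h5
  -- no two adjacent vertices at equal distance from r, if both within distance t of r
  have adj_dist_ne : ∀ (r u v : V), G.Adj u v → G.dist r u ≤ t → G.dist r v ≤ t →
      G.dist r u ≠ G.dist r v := by
    intro r u v huv hu hv heq
    obtain ⟨P, hP, hPl⟩ := hconn.exists_path_of_dist r u
    obtain ⟨Q, hQ, hQl⟩ := hconn.exists_path_of_dist r v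
    have huQ : u ∉ Q.support := by
      intro hmem
      have h1 : G.dist r u ≤ (Q.takeUntil u hmem).length := SimpleGraph.dist_le _
      have h2 := congrArg Walk.length (Q.take_spec hmem)
      rw [Walk.length_append] at h2
      have h3 : (Q.dropUntil u hmem).length ≠ 0 :=
        fun h0 => huv.ne (Walk.eq_of_length_eq_zero h0)
      omega
    have hcons : (Walk.cons huv Q.reverse).IsPath := by
      rw [Walk.cons_isPath_iff]
      exact ⟨hQ.reverse, by rwa [Walk.support_reverse, List.mem_reverse]⟩
    have hnepq : P.reverse ≠ Walk.cons huv Q.reverse := by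
      intro h
      have := congrArg Walk.length h
      rw [Walk.length_reverse, Walk.length_cons, Walk.length_reverse] at this
      omega
    obtain ⟨x, cyc, hcycle, hcl⟩ := cycle_of_two_paths
      (P.reverse.length + (Walk.cons huv Q.reverse).length)
      P.reverse (Walk.cons huv Q.reverse) hP.reverse hcons hnepq le_rfl
    have := hcyc x cyc hcycle
    rw [Walk.length_reverse, Walk.length_cons, Walk.length_reverse] at hcl
    omega
  -- at most one "parent" : adjacent strictly closer neighbors toward r are unique
  have unique_parent : ∀ (r v a b : V), G.Adj a v → G.Adj b v →
      G.dist r a < G.dist r v → G.dist r b < G.dist r v → G.dist r v ≤ t → a = b := by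
    intro r v a b hav hbv ha hb hv
    by_contra hab
    obtain ⟨P, hP, hPl⟩ := hconn.exists_path_of_dist r a
    obtain ⟨Q, hQ, hQl⟩ := hconn.exists_path_of_dist r b
    have hvP : v ∉ P.support := by
      intro hmem
      have h1 : G.dist r v ≤ (P.takeUntil v hmem).length := SimpleGraph.dist_le _
      have h2 := congrArg Walk.length (P.take_spec hmem)
      rw [Walk.length_append] at h2
      omega
    have hvQ : v ∉ Q.support := by
      intro hmem
      have h1 : G.dist r v ≤ (Q.takeUntil v hmem).length := SimpleGraph.dist_le _
      have h2 := congrArg Walk.length (Q.take_spec hmem)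
      rw [Walk.length_append] at h2
      omega
    have hp1 : (Walk.cons hav.symm P.reverse).IsPath := by
      rw [Walk.cons_isPath_iff]
      exact ⟨hP.reverse, by rwa [Walk.support_reverse, List.mem_reverse]⟩
    have hp2 : (Walk.cons hbv.symm Q.reverse).IsPath := by
      rw [Walk.cons_isPath_iff]
      exact ⟨hQ.reverse, by rwa [Walk.support_reverse, List.mem_reverse]⟩
    have hne12 : Walk.cons hav.symm P.reverse ≠ Walk.cons hbv.symm Q.reverse := by
      intro h
      apply hab
      have hs := congrArg Walk.support h
      rw [Walk.support_cons, Walk.support_cons, Walk.support_eq_cons P.reverse,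
        Walk.support_eq_cons Q.reverse] at hs
      injection hs with hs1 hs2
      injection hs2 with hs3 hs4
      try exact hs3
    obtain ⟨x, cyc, hcycle, hcl⟩ := cycle_of_two_paths
      ((Walk.cons hav.symm P.reverse).length + (Walk.cons hbv.symm Q.reverse).length)
      _ _ hp1 hp2 hne12 le_rfl
    have := hcyc x cyc hcycle
    rw [Walk.length_cons, Walk.length_cons, Walk.length_reverse, Walk.length_reverse] at hcl
    omega
  -- main counting
  have key : G.edgeFinset.card ≤ ∑ S ∈ C, S.card := by
    set F : Finset V → Finset (Sym2 V) := fun S =>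
      if (∀ u ∈ S, ∀ v ∈ S, G.dist u v ≤ t) then
        G.edgeFinset.filter (fun e => ∀ x ∈ e, x ∈ S) else ∅ with hF
    have hsub : G.edgeFinset ⊆ C.biUnion F := by
      intro e he
      induction e using Sym2.ind with
      | _ p q =>
        have hadj : G.Adj p q := by rwa [mem_edgeFinset, mem_edgeSet] at he
        obtain ⟨S, hSC, hpS, hqS, hd⟩ := hC p q hadj.ne
        have hdist1 : G.dist p q = 1 := SimpleGraph.dist_eq_one_iff_adj.mpr hadj
        have hprop : ∀ u ∈ S, ∀ v ∈ S, G.dist u v ≤ t := by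
          intro u hu v hv
          have := hd u hu v hv
          rw [hdist1] at this
          omega
        rw [Finset.mem_biUnion]
        refine ⟨S, hSC, ?_⟩
        simp only [hF, if_pos hprop, Finset.mem_filter]
        refine ⟨he, fun x hx => ?_⟩
        rcases Sym2.mem_iff.mp hx with rfl | rfl
        exacts [hpS, hqS]
    have hcard : ∀ S ∈ C, (F S).card ≤ S.card := by
      intro S _
      simp only [hF]
      split_ifs with hprop
      · rcases S.eq_empty_or_nonempty with rfl | ⟨r, hr⟩
        · have : G.edgeFinset.filter (fun e => ∀ x ∈ e, x ∈ (∅ : Finset V)) = ∅ := by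
            refine Finset.eq_empty_of_forall_notMem fun e he => ?_
            rw [Finset.mem_filter] at he
            exact absurd (he.2 e.out.1 (Sym2.out_fst_mem e)) (by simp)
          rw [this]
          exact le_rfl
        · set f : Sym2 V → V := Sym2.lift ⟨fun a b =>
            if G.dist r a < G.dist r b then b else if G.dist r b < G.dist r a then a else r,
            by
              intro a b
              dsimp only
              rcases lt_trichotomy (G.dist r a) (G.dist r b) with h | h | h
              · rw [if_pos h, if_neg (by omega), if_pos h]
              · rw [if_neg (by omega), if_neg (by omega), if_neg (by omega), if_neg (by omega)]
              · rw [if_neg (by omega), if_pos h, if_pos h]⟩ with hf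
          have fval : ∀ a b : V, G.dist r a < G.dist r b → f s(a, b) = b := by
            intro a b h
            rw [hf, Sym2.lift_mk]
            dsimp only
            rw [if_pos h]
          apply Finset.card_le_card_of_injOn f
          · intro e he
            rw [Finset.mem_coe, Finset.mem_filter] at he
            obtain ⟨he1, hes⟩ := he
            induction e using Sym2.ind with
            | _ a b =>
              have hadj : G.Adj a b := by rwa [mem_edgeFinset, mem_edgeSet] at he1
              have haS : a ∈ S := hes a (Sym2.mem_mk_left a b)
              have hbS : b ∈ S := hes b (Sym2.mem_mk_right a b)
              have hne := adj_dist_ne r a b hadj (hprop r hr a haS) (hprop r hr b hbS)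
              rcases hne.lt_or_gt with h | h
              · rw [fval a b h]; exact hbS
              · rw [Sym2.eq_swap, fval b a h]; exact haS
          · intro e1 h1 e2 h2 hfe
            rw [Finset.coe_filter, Set.mem_setOf_eq] at h1 h2
            obtain ⟨h1e, h1s⟩ := h1
            obtain ⟨h2e, h2s⟩ := h2
            induction e1 using Sym2.ind with
            | _ a1 b1 =>
              induction e2 using Sym2.ind with
              | _ a2 b2 =>
                have hadj1 : G.Adj a1 b1 := by rwa [mem_edgeFinset, mem_edgeSet] at h1e
                have hadj2 : G.Adj a2 b2 := by rwa [mem_edgeFinset, mem_edgeSet] at h2e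
                have ha1S : a1 ∈ S := h1s a1 (Sym2.mem_mk_left a1 b1)
                have hb1S : b1 ∈ S := h1s b1 (Sym2.mem_mk_right a1 b1)
                have ha2S : a2 ∈ S := h2s a2 (Sym2.mem_mk_left a2 b2)
                have hb2S : b2 ∈ S := h2s b2 (Sym2.mem_mk_right a2 b2)
                have hne1 := adj_dist_ne r a1 b1 hadj1 (hprop r hr a1 ha1S) (hprop r hr b1 hb1S)
                have hne2 := adj_dist_ne r a2 b2 hadj2 (hprop r hr a2 ha2S) (hprop r hr b2 hb2S)
                have claim : ∀ x1 y1 x2 y2 : V, G.Adj x1 y1 → G.Adj x2 y2 → y1 ∈ S →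
                    G.dist r x1 < G.dist r y1 → G.dist r x2 < G.dist r y2 →
                    f s(x1, y1) = f s(x2, y2) → s(x1, y1) = s(x2, y2) := by
                  intro x1 y1 x2 y2 hxy1 hxy2 hy1S hd1 hd2 hfeq
                  rw [fval _ _ hd1, fval _ _ hd2] at hfeq
                  subst hfeq
                  have := unique_parent r y1 x1 x2 hxy1 hxy2 hd1 hd2 (hprop r hr y1 hy1S)
                  rw [this]
                rcases hne1.lt_or_gt with hd1 | hd1 <;> rcases hne2.lt_or_gt with hd2 | hd2
                · exact claim a1 b1 a2 b2 hadj1 hadj2 hb1S hd1 hd2 hfe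
                · rw [Sym2.eq_swap (a := a2)] at hfe ⊢
                  exact claim a1 b1 b2 a2 hadj1 hadj2.symm hb1S hd1 hd2 hfe
                · rw [Sym2.eq_swap (a := a1)] at hfe ⊢
                  exact claim b1 a1 a2 b2 hadj1.symm hadj2 ha1S hd1 hd2 hfe
                · rw [Sym2.eq_swap (a := a1), Sym2.eq_swap (a := a2)] at hfe ⊢
                  exact claim b1 a1 b2 a2 hadj1.symm hadj2.symm ha1S hd1 hd2 hfe
      · exact Nat.zero_le _
    calc G.edgeFinset.card ≤ (C.biUnion F).card := Finset.card_le_card hsub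
      _ ≤ ∑ S ∈ C, (F S).card := Finset.card_biUnion_le
      _ ≤ ∑ S ∈ C, S.card := Finset.sum_le_sum hcard
  have first : (G.edgeFinset.card : ℝ) ≤ ∑ S ∈ C, (S.card : ℝ) := by
    push_cast
    exact_mod_cast key
  exact ⟨first, hE.trans first⟩
end

section
/- (Tree separator cover quality.) Let T be a weighted tree with vertex set P and shortest-path metric d, let s ∈ P be any vertex, and for ε ∈ (0,1) and i ≥ 0 define P(s,i) = { p ∈ P : d(s,p) ≤ (1+ε/2)^i }. If p, q ∈ P are vertices such that the unique tree path from p to q passes through s, and d(s,p) ≥ d(s,q), and j ≥ 1 is the minimum index with d(s,p) ≤ (1+ε/2)^j, then p, q ∈ P(s,j) and diam(P(s,j)) ≤ (2+ε)·d(p,q). -/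
/-- Tree separator cover quality: if the (tree) path from `p` to `q` passes
through `s` (so `d(p,s)+d(s,q) = d(p,q)`), `d(s,q) ≤ d(s,p)`, and `j ≥ 1` is the
minimal index with `d(s,p) ≤ (1+ε/2)^j`, then `p,q ∈ P(s,j)` and
`diam P(s,j) ≤ (2+ε)·d(p,q)`, where `P(s,i) = {x : d(s,x) ≤ (1+ε/2)^i}`. -/
theorem tree_separator_cover_quality
    {P : Type} [MetricSpace P]
    (s p q : P) (ε : ℝ) (hε : ε ∈ Set.Ioo (0 : ℝ) 1)
    (hpath : dist p s + dist s q = dist p q)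
    (hord : dist s q ≤ dist s p)
    (j : ℕ) (hj : 1 ≤ j)
    (hle : dist s p ≤ (1 + ε / 2) ^ j)
    (hmin : ∀ i < j, ((1 + ε / 2 : ℝ)) ^ i < dist s p) :
    p ∈ {x : P | dist s x ≤ (1 + ε / 2) ^ j} ∧
    q ∈ {x : P | dist s x ≤ (1 + ε / 2) ^ j} ∧
    Metric.diam {x : P | dist s x ≤ (1 + ε / 2) ^ j} ≤ (2 + ε) * dist p q := by
  obtain ⟨hε0, hε1⟩ := hε
  have hsp : dist s p ≤ (1 + ε / 2) ^ j := hle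
  refine ⟨hsp, hord.trans hsp, ?_⟩
  -- diam bound via center s
  have hdiam : Metric.diam {x : P | dist s x ≤ (1 + ε / 2) ^ j}
      ≤ 2 * (1 + ε / 2) ^ j := by
    apply Metric.diam_le_of_forall_dist_le
    · positivity
    · intro x hx y hy
      calc dist x y ≤ dist x s + dist s y := dist_triangle x s y
        _ = dist s x + dist s y := by rw [dist_comm x s]
        _ ≤ (1 + ε / 2) ^ j + (1 + ε / 2) ^ j := add_le_add hx hy
        _ = 2 * (1 + ε / 2) ^ j := by ring
  -- lower bound on dist p q
  have hlow : (1 + ε / 2 : ℝ) ^ (j - 1) ≤ dist p q := by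
    have h1 := hmin (j - 1) (by omega)
    have : dist s p ≤ dist p q := by
      rw [← hpath, dist_comm p s]
      linarith [dist_nonneg (x := s) (y := q)]
    linarith
  have hpow : 2 * (1 + ε / 2 : ℝ) ^ j = (2 + ε) * (1 + ε / 2) ^ (j - 1) := by
    obtain ⟨k, rfl⟩ : ∃ k, j = k + 1 := ⟨j - 1, by omega⟩
    simp only [Nat.add_sub_cancel, pow_succ]
    ring
  calc Metric.diam {x : P | dist s x ≤ (1 + ε / 2) ^ j}
      ≤ 2 * (1 + ε / 2) ^ j := hdiam
    _ = (2 + ε) * (1 + ε / 2) ^ (j - 1) := hpow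
    _ ≤ (2 + ε) * dist p q := by nlinarith
end

section
/- (Vertex expansion of random permutation graphs, union bound computation.) Fix ε, δ ∈ (0,1/2) and an even integer d with 12/(εδ) ≤ d ≤ √n. In the permutation model with d/2 independent uniform permutations of [n], the probability that there exists S ⊆ [n] with |S| = ⌈εn⌉ whose forward-neighborhood Γ(S) = ∪_j π_j(S) is contained in some set T of size ⌊(1−δ)n⌋ is at most C(n, s)·C(n, t)·((1−δ))^{εnd/2} ≤ exp(−3n), where s = ⌈εn⌉ and t = ⌊(1−δ)n⌋. -/
open Finset

private lemma desc_aux (n t : ℕ) (ht : t ≤ n) :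
    ∀ s : ℕ, t.descFactorial s * n ^ s ≤ t ^ s * n.descFactorial s
  | 0 => by simp
  | (s+1) => by
    rw [Nat.descFactorial_succ, Nat.descFactorial_succ, pow_succ, pow_succ]
    have key : (t - s) * n ≤ t * (n - s) := by
      rcases le_or_gt t s with h | h
      · simp [Nat.sub_eq_zero_of_le h]
      · have h1 : (t - s) * n = t * n - s * n := by rw [Nat.sub_mul]
        have h2 : t * (n - s) = t * n - t * s := by rw [Nat.mul_sub]
        rw [h1, h2]
        exact Nat.sub_le_sub_left (by nlinarith : t * s ≤ s * n) _
    have ih := desc_aux n t ht s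
    calc (t - s) * t.descFactorial s * (n ^ s * n)
        = ((t - s) * n) * (t.descFactorial s * n ^ s) := by ring
      _ ≤ (t * (n - s)) * (t ^ s * n.descFactorial s) := Nat.mul_le_mul key ih
      _ = t ^ s * t * ((n - s) * n.descFactorial s) := by ring

private lemma card_perm_fixing (n : ℕ) (G : Finset (Fin n)) :
    (Finset.univ.filter (fun τ : Equiv.Perm (Fin n) => ∀ x ∈ G, τ x = x)).card ≤
      (n - G.card).factorial := by
  classical
  rw [← Fintype.card_subtype]
  have hinj : Function.Injective
      (fun τ : {τ : Equiv.Perm (Fin n) // ∀ x ∈ G, τ x = x} =>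
        (Equiv.Perm.subtypeEquivSubtypePerm (fun x : Fin n => x ∉ G)).symm
          ⟨τ.1, fun a ha => τ.2 a (not_not.mp ha)⟩) := by
    intro a b hab
    have := (Equiv.Perm.subtypeEquivSubtypePerm (fun x : Fin n => x ∉ G)).symm.injective hab
    rw [Subtype.mk.injEq] at this
    exact Subtype.ext this
  have hcard := Fintype.card_le_of_injective _ hinj
  refine hcard.trans ?_
  rw [Fintype.card_perm]
  apply Nat.factorial_le
  have : Fintype.card {x : Fin n // x ∉ G} = n - G.card := by
    rw [Fintype.card_subtype_compl]
    simp [Fintype.card_coe]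
  omega



private lemma card_perm_maps (n : ℕ) (S T : Finset (Fin n)) :
    (Finset.univ.filter (fun σ : Equiv.Perm (Fin n) => ∀ u ∈ S, σ u ∈ T)).card ≤
      T.card.descFactorial S.card * (n - S.card).factorial := by
  classical
  set B := Finset.univ.filter (fun σ : Equiv.Perm (Fin n) => ∀ u ∈ S, σ u ∈ T) with hB
  set F : Equiv.Perm (Fin n) → ({x // x ∈ S} ↪ Fin n) :=
    fun σ => (Function.Embedding.subtype _).trans σ.toEmbedding with hF
  have hfiber : ∀ g ∈ B.image F,
      (B.filter (fun σ => F σ = g)).card ≤ (n - S.card).factorial := by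
    intro g hg
    obtain ⟨σ₀, hσ₀B, hFσ₀⟩ := Finset.mem_image.mp hg
    set G : Finset (Fin n) := S.image σ₀ with hG
    have hGcard : G.card = S.card := Finset.card_image_of_injective _ σ₀.injective
    have hle : (B.filter (fun σ => F σ = g)).card ≤
        (Finset.univ.filter (fun τ : Equiv.Perm (Fin n) => ∀ x ∈ G, τ x = x)).card := by
      apply Finset.card_le_card_of_injOn (fun σ => σ * σ₀⁻¹)
      · intro σ hσ
        simp only [Finset.mem_coe, Finset.mem_filter] at hσ ⊢
        refine ⟨Finset.mem_univ _, ?_⟩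
        intro x hx
        obtain ⟨u, hu, rfl⟩ := Finset.mem_image.mp hx
        have h1 : σ u = σ₀ u := by
          have := hσ.2.trans hFσ₀.symm
          exact congrFun (congrArg (fun (e : {x // x ∈ S} ↪ Fin n) => (e : {x // x ∈ S} → Fin n)) this) ⟨u, hu⟩
        simp [Equiv.Perm.mul_apply, h1]
      · intro a _ b _ hab
        exact mul_right_cancel hab
    exact hle.trans (by rw [← hGcard]; exact card_perm_fixing n G)
  have himage : (B.image F).card ≤ T.card.descFactorial S.card := by
    have hmem : ∀ g ∈ B.image F, ∀ u : {x // x ∈ S}, g u ∈ T := by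
      intro g hg u
      obtain ⟨σ, hσB, rfl⟩ := Finset.mem_image.mp hg
      exact (Finset.mem_filter.mp hσB).2 u u.2
    have hinj : Function.Injective
        (fun gh : {g // g ∈ B.image F} =>
          (⟨fun u => ⟨gh.1 u, hmem gh.1 gh.2 u⟩,
            fun a b h => gh.1.injective (congrArg Subtype.val h)⟩ :
            {x // x ∈ S} ↪ {x // x ∈ T})) := by
      intro a b hab
      apply Subtype.ext
      apply Function.Embedding.ext
      intro u
      have := congrFun (congrArg (fun (e : {x // x ∈ S} ↪ {x // x ∈ T}) =>
        (e : {x // x ∈ S} → {x // x ∈ T})) hab) u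
      exact congrArg Subtype.val this
    have := Fintype.card_le_of_injective _ hinj
    rw [Fintype.card_embedding_eq] at this
    rw [Fintype.card_of_subtype (B.image F) (fun _ => Iff.rfl),
      Fintype.card_of_subtype T (fun _ => Iff.rfl),
      Fintype.card_of_subtype S (fun _ => Iff.rfl)] at this
    exact this
  calc B.card ≤ (n - S.card).factorial * (B.image F).card :=
        Finset.card_le_mul_card_image B _ hfiber
    _ ≤ (n - S.card).factorial * T.card.descFactorial S.card :=
        Nat.mul_le_mul_left _ himage
    _ = T.card.descFactorial S.card * (n - S.card).factorial := Nat.mul_comm _ _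



private lemma union_bound (n k s t : ℕ) :
    ((Finset.univ.filter
        (fun π : Fin k → Equiv.Perm (Fin n) =>
          ∃ S T : Finset (Fin n), S.card = s ∧ T.card = t ∧
            ∀ j : Fin k, ∀ u ∈ S, (π j) u ∈ T)).card) ≤
      n.choose s * n.choose t * (t.descFactorial s * (n - s).factorial) ^ k := by
  classical
  have hsub : (Finset.univ.filter
        (fun π : Fin k → Equiv.Perm (Fin n) =>
          ∃ S T : Finset (Fin n), S.card = s ∧ T.card = t ∧
            ∀ j : Fin k, ∀ u ∈ S, (π j) u ∈ T)) ⊆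
      ((powersetCard s (univ : Finset (Fin n)) ×ˢ powersetCard t (univ : Finset (Fin n))).biUnion
        (fun p => Fintype.piFinset (fun _ : Fin k =>
          Finset.univ.filter (fun σ : Equiv.Perm (Fin n) => ∀ u ∈ p.1, σ u ∈ p.2)))) := by
    intro π hπ
    obtain ⟨-, S, T, hS, hT, hcond⟩ := Finset.mem_filter.mp hπ
    refine Finset.mem_biUnion.mpr ⟨(S, T), ?_, ?_⟩
    · exact Finset.mem_product.mpr ⟨mem_powersetCard_univ.mpr hS, mem_powersetCard_univ.mpr hT⟩
    · exact Fintype.mem_piFinset.mpr (fun j => Finset.mem_filter.mpr ⟨Finset.mem_univ _, hcond j⟩)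
  calc _ ≤ _ := Finset.card_le_card hsub
    _ ≤ ∑ p ∈ (powersetCard s (univ : Finset (Fin n)) ×ˢ powersetCard t (univ : Finset (Fin n))),
        (Fintype.piFinset (fun _ : Fin k =>
          Finset.univ.filter (fun σ : Equiv.Perm (Fin n) => ∀ u ∈ p.1, σ u ∈ p.2))).card :=
        Finset.card_biUnion_le
    _ ≤ ∑ _p ∈ (powersetCard s (univ : Finset (Fin n)) ×ˢ powersetCard t (univ : Finset (Fin n))),
        (t.descFactorial s * (n - s).factorial) ^ k := by
        apply Finset.sum_le_sum
        intro p hp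
        obtain ⟨hp1, hp2⟩ := Finset.mem_product.mp hp
        have hS : p.1.card = s := (mem_powersetCard_univ.mp hp1)
        have hT : p.2.card = t := (mem_powersetCard_univ.mp hp2)
        rw [Fintype.card_piFinset]
        calc ∏ _j : Fin k, (Finset.univ.filter
              (fun σ : Equiv.Perm (Fin n) => ∀ u ∈ p.1, σ u ∈ p.2)).card
            ≤ ∏ _j : Fin k, (t.descFactorial s * (n - s).factorial) := by
              apply Finset.prod_le_prod' 
              intro j _
              have := card_perm_maps n p.1 p.2
              rwa [hS, hT] at this
          _ = (t.descFactorial s * (n - s).factorial) ^ k := by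
              rw [Finset.prod_const, Finset.card_univ, Fintype.card_fin]
    _ = n.choose s * n.choose t * (t.descFactorial s * (n - s).factorial) ^ k := by
        rw [Finset.sum_const, Finset.card_product, Finset.card_powersetCard,
          Finset.card_powersetCard, Finset.card_univ, Fintype.card_fin, smul_eq_mul]





private lemma choose_le_two_pow (n k : ℕ) : n.choose k ≤ 2 ^ n := by
  rcases le_or_gt k n with h | h
  · calc n.choose k ≤ ∑ m ∈ Finset.range (n + 1), n.choose m :=
        Finset.single_le_sum (f := fun m => n.choose m) (fun _ _ => Nat.zero_le _)
          (Finset.mem_range.mpr (Nat.lt_succ_of_le h))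
      _ = 2 ^ n := Nat.sum_range_choose n
  · rw [Nat.choose_eq_zero_of_lt h]; exact Nat.zero_le _

/-- Vertex expansion of random permutation graphs (union bound computation):
for `ε, δ ∈ (0,1/2)` and even `d` with `12/(εδ) ≤ d ≤ √n`, in the permutation
model with `d/2` independent uniform permutations of `[n]`, the probability that
there exists `S` of size `⌈εn⌉` whose forward neighborhood `Γ(S) = ∪_j π_j(S)`
is contained in some `T` of size `⌊(1−δ)n⌋` is at most
`C(n,s)·C(n,t)·(1−δ)^{εnd/2} ≤ exp(−3n)`. -/
theorem perm_model_vertex_expansion_union_bound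
    (n d : ℕ) (ε δ : ℝ)
    (hε : ε ∈ Set.Ioo (0 : ℝ) (1 / 2)) (hδ : δ ∈ Set.Ioo (0 : ℝ) (1 / 2))
    (hdeven : Even d)
    (hd1 : 12 / (ε * δ) ≤ (d : ℝ)) (hd2 : (d : ℝ) ≤ Real.sqrt n) :
    ((Finset.univ.filter
        (fun π : Fin (d / 2) → Equiv.Perm (Fin n) =>
          ∃ S T : Finset (Fin n), S.card = ⌈ε * (n : ℝ)⌉₊ ∧
            T.card = ⌊(1 - δ) * (n : ℝ)⌋₊ ∧
            ∀ j : Fin (d / 2), ∀ u ∈ S, (π j) u ∈ T)).card : ℝ) /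
      (Fintype.card (Fin (d / 2) → Equiv.Perm (Fin n)) : ℝ) ≤
      (n.choose ⌈ε * (n : ℝ)⌉₊ : ℝ) * (n.choose ⌊(1 - δ) * (n : ℝ)⌋₊ : ℝ) *
        (1 - δ) ^ (ε * (n : ℝ) * (d : ℝ) / 2) ∧
    (n.choose ⌈ε * (n : ℝ)⌉₊ : ℝ) * (n.choose ⌊(1 - δ) * (n : ℝ)⌋₊ : ℝ) *
        (1 - δ) ^ (ε * (n : ℝ) * (d : ℝ) / 2) ≤ Real.exp (-3 * (n : ℝ)) := by
  obtain ⟨hε0, hε2⟩ := hε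
  obtain ⟨hδ0, hδ2⟩ := hδ
  have hεδ : 0 < ε * δ := mul_pos hε0 hδ0
  have hd0 : (0 : ℝ) < d := lt_of_lt_of_le (by positivity) hd1
  have hn0 : 0 < n := by
    rcases Nat.eq_zero_or_pos n with h | h
    · exfalso
      rw [h] at hd2
      simp [Real.sqrt_zero] at hd2
      rw [hd2] at hd0
      simp at hd0
    · exact h
  have hn0R : (0 : ℝ) < n := by exact_mod_cast hn0
  have hd12 : 12 ≤ ε * δ * d := by
    rw [div_le_iff₀ hεδ] at hd1
    linarith
  set s := ⌈ε * (n : ℝ)⌉₊ with hs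
  set t := ⌊(1 - δ) * (n : ℝ)⌋₊ with ht
  set k := d / 2 with hk
  have hkR : (k : ℝ) = (d : ℝ) / 2 := by
    obtain ⟨m, hm⟩ := hdeven
    subst hm
    have : (m + m) / 2 = m := by omega
    rw [hk, this]
    push_cast
    ring
  have h1δ : (0 : ℝ) < 1 - δ := by linarith
  have hsn : s ≤ n := by
    rw [hs, Nat.ceil_le]
    nlinarith
  have htn : (t : ℝ) ≤ (1 - δ) * n := Nat.floor_le (by positivity)
  have htn' : t ≤ n := by
    have : (1 - δ) * (n : ℝ) ≤ n := by nlinarith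
    calc t ≤ ⌊(n : ℝ)⌋₊ := Nat.floor_le_floor this
      _ = n := Nat.floor_natCast n
  have hsR : ε * n ≤ (s : ℝ) := Nat.le_ceil _
  -- the single-round probability bound
  have hfrac : ((t.descFactorial s * (n - s).factorial : ℕ) : ℝ) / (n.factorial : ℝ) ≤
      (1 - δ) ^ s := by
    have hnfact : ((n - s).factorial * n.descFactorial s : ℕ) = n.factorial :=
      Nat.factorial_mul_descFactorial hsn
    have hdpos : (0 : ℝ) < (n.descFactorial s : ℝ) := by
      have : n.descFactorial s ≠ 0 := fun h =>
        absurd hsn (Nat.not_le.mpr (Nat.descFactorial_eq_zero_iff_lt.mp h))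
      exact_mod_cast Nat.pos_of_ne_zero this
    have hfpos : (0 : ℝ) < ((n - s).factorial : ℝ) := by
      exact_mod_cast Nat.factorial_pos _
    have h1 : ((t.descFactorial s * (n - s).factorial : ℕ) : ℝ) / (n.factorial : ℝ)
        = (t.descFactorial s : ℝ) / (n.descFactorial s : ℝ) := by
      rw [← hnfact]
      push_cast
      field_simp
    rw [h1]
    have h2 : (t.descFactorial s : ℝ) / (n.descFactorial s : ℝ) ≤ ((t : ℝ) / n) ^ s := by
      rw [div_pow, div_le_div_iff₀ hdpos (by positivity)]
      have := desc_aux n t htn' s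
      exact_mod_cast this
    refine h2.trans ?_
    apply pow_le_pow_left₀ (by positivity)
    rw [div_le_iff₀ hn0R]
    exact htn
  -- total card
  have htotal : (Fintype.card (Fin k → Equiv.Perm (Fin n)) : ℝ) = ((n.factorial : ℝ)) ^ k := by
    rw [Fintype.card_fun, Fintype.card_perm, Fintype.card_fin, Fintype.card_fin]
    push_cast
    ring
  have hnfactpos : (0 : ℝ) < ((n.factorial : ℝ)) ^ k := by positivity
  -- part 1
  have hpart1 : ((Finset.univ.filter
        (fun π : Fin k → Equiv.Perm (Fin n) =>
          ∃ S T : Finset (Fin n), S.card = s ∧ T.card = t ∧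
            ∀ j : Fin k, ∀ u ∈ S, (π j) u ∈ T)).card : ℝ) /
      (Fintype.card (Fin k → Equiv.Perm (Fin n)) : ℝ) ≤
      (n.choose s : ℝ) * (n.choose t : ℝ) * (1 - δ) ^ (ε * (n : ℝ) * (d : ℝ) / 2) := by
    rw [htotal]
    rw [div_le_iff₀ hnfactpos]
    calc ((Finset.univ.filter
        (fun π : Fin k → Equiv.Perm (Fin n) =>
          ∃ S T : Finset (Fin n), S.card = s ∧ T.card = t ∧
            ∀ j : Fin k, ∀ u ∈ S, (π j) u ∈ T)).card : ℝ)
        ≤ ((n.choose s * n.choose t * (t.descFactorial s * (n - s).factorial) ^ k : ℕ) : ℝ) := by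
          exact_mod_cast union_bound n k s t
      _ = (n.choose s : ℝ) * (n.choose t : ℝ) *
            (((t.descFactorial s * (n - s).factorial : ℕ) : ℝ) / (n.factorial : ℝ)) ^ k *
            ((n.factorial : ℝ)) ^ k := by
          push_cast
          rw [mul_assoc _ (_ ^ k) (_ ^ k), ← mul_pow, div_mul_cancel₀ _ (by positivity)]
      _ ≤ (n.choose s : ℝ) * (n.choose t : ℝ) * ((1 - δ) ^ s) ^ k * ((n.factorial : ℝ)) ^ k := by
          apply mul_le_mul_of_nonneg_right _ (le_of_lt hnfactpos)
          apply mul_le_mul_of_nonneg_left _ (by positivity)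
          apply pow_le_pow_left₀ (by positivity) hfrac
      _ ≤ (n.choose s : ℝ) * (n.choose t : ℝ) * (1 - δ) ^ (ε * (n : ℝ) * (d : ℝ) / 2) *
            ((n.factorial : ℝ)) ^ k := by
          apply mul_le_mul_of_nonneg_right _ (le_of_lt hnfactpos)
          apply mul_le_mul_of_nonneg_left _ (by positivity)
          rw [← pow_mul]
          rw [← Real.rpow_natCast (1 - δ) (s * k)]
          apply Real.rpow_le_rpow_of_exponent_ge h1δ (by linarith)
          push_cast
          calc ε * (n : ℝ) * (d : ℝ) / 2 = (ε * n) * ((d : ℝ) / 2) := by ring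
            _ ≤ (s : ℝ) * ((d : ℝ) / 2) := by
                apply mul_le_mul_of_nonneg_right hsR
                positivity
            _ = (s : ℝ) * (k : ℝ) := by rw [hkR]
  -- part 2
  have hchoose1 : (n.choose s : ℝ) ≤ 2 ^ n := by exact_mod_cast choose_le_two_pow n s
  have hchoose2 : (n.choose t : ℝ) ≤ 2 ^ n := by exact_mod_cast choose_le_two_pow n t
  have hrpow : (1 - δ) ^ (ε * (n : ℝ) * (d : ℝ) / 2) ≤ Real.exp (-6 * n) := by
    rw [Real.rpow_def_of_pos h1δ]
    apply Real.exp_le_exp.mpr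
    have hlog : Real.log (1 - δ) ≤ -δ := by
      have := Real.log_le_sub_one_of_pos h1δ
      linarith
    have hx0 : (0 : ℝ) ≤ ε * (n : ℝ) * (d : ℝ) / 2 := by positivity
    calc Real.log (1 - δ) * (ε * (n : ℝ) * (d : ℝ) / 2)
        ≤ (-δ) * (ε * (n : ℝ) * (d : ℝ) / 2) := mul_le_mul_of_nonneg_right hlog hx0
      _ ≤ -6 * n := by nlinarith
  have htwo : (2 : ℝ) ^ n ≤ Real.exp ((3 / 2) * n) := by
    have h2e : (2 : ℝ) ≤ Real.exp (3 / 2) := by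
      have := Real.add_one_le_exp (3 / 2 : ℝ)
      linarith
    calc (2 : ℝ) ^ n ≤ (Real.exp (3 / 2)) ^ n := pow_le_pow_left₀ (by norm_num) h2e n
      _ = Real.exp ((3 / 2) * n) := by
          rw [← Real.exp_nat_mul]
          ring_nf
  have hpart2 : (n.choose s : ℝ) * (n.choose t : ℝ) * (1 - δ) ^ (ε * (n : ℝ) * (d : ℝ) / 2)
      ≤ Real.exp (-3 * (n : ℝ)) := by
    calc (n.choose s : ℝ) * (n.choose t : ℝ) * (1 - δ) ^ (ε * (n : ℝ) * (d : ℝ) / 2)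
        ≤ Real.exp ((3 / 2) * n) * Real.exp ((3 / 2) * n) * Real.exp (-6 * n) := by
          apply mul_le_mul
          apply mul_le_mul (hchoose1.trans htwo) (hchoose2.trans htwo) (by positivity)
            (by positivity)
          exact hrpow
          · positivity
          · positivity
      _ = Real.exp (-3 * (n : ℝ)) := by
          rw [← Real.exp_add, ← Real.exp_add]
          ring_nf
  exact ⟨hpart1, hpart2⟩
end
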